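/- For complex q, z with |q| < 1 and |zq| < 1, Σ_{n≥0} z^{2n} q^{n²+n} / (−zq; q²)_{n+1} = Σ_{n≥0} (zq; q²)_n (−zq)ⁿ. -/

import Mathlib

open scoped BigOperators

/-- Finite q-Pochhammer symbol `(a; q)_n`. -/
noncomputable def qPoch (a q : ℂ) (n : ℕ) : ℂ :=
  ∏ k ∈ Finset.range n, (1 - a * q ^ k)

/-- Infinite q-Pochhammer symbol `(a; q)_∞`. -/
noncomputable def qPochInf (a q : ℂ) : ℂ :=
  ∏' k : ℕ, (1 - a * q ^ k)

/-!
Expand `1 / (-zq; q²)_{n+1}` by the q-binomial theorem as `∑ₘ [n+m, m] (-zq)ᵐ` (base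
`Q = q²`), and `(zq; q²)_N` by Rothe's finite q-binomial theorem. With `N = n + m` and the
symmetry `[n+m, m] = [n+m, n]` the two double series agree term by term, so the identity is a
rearrangement of one absolutely convergent double series. Absolute convergence holds because for
`‖Q‖ < 1` the products `(Q; Q)_n` stay between two positive constants, so the Gaussian binomials
are uniformly bounded.
-/

open Finset

@[simp]
lemma qPoch_zero (a q : ℂ) : qPoch a q 0 = 1 := prod_range_zero _

lemma qPoch_succ (a q : ℂ) (n : ℕ) : qPoch a q (n + 1) = qPoch a q n * (1 - a * q ^ n) :=
  prod_range_succ _ n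

lemma qPoch_succ' (a q : ℂ) (n : ℕ) : qPoch a q (n + 1) = (1 - a) * qPoch (a * q) q n := by
  simp only [qPoch, prod_range_succ', pow_zero, mul_one, pow_succ, mul_assoc, mul_comm]

lemma qPoch_ne_zero {a q : ℂ} (ha : ‖a‖ < 1) (hq : ‖q‖ ≤ 1) (n : ℕ) : qPoch a q n ≠ 0 := by
  refine prod_ne_zero_iff.2 fun k _ => sub_ne_zero.2 fun h => ?_
  have : ‖a * q ^ k‖ < 1 := by
    rw [norm_mul, norm_pow]
    exact mul_lt_one_of_nonneg_of_lt_one_left (norm_nonneg a) ha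
      (pow_le_one₀ (norm_nonneg q) hq)
  simp [← h] at this

lemma norm_prod_one_sub_le_exp {ι : Type*} (s : Finset ι) (x : ι → ℂ) :
    ‖∏ i ∈ s, (1 - x i)‖ ≤ Real.exp (∑ i ∈ s, ‖x i‖) := by
  rw [norm_prod, Real.exp_sum]
  refine prod_le_prod (fun i _ => norm_nonneg _) fun i _ => ?_
  calc ‖1 - x i‖ ≤ ‖x i‖ + 1 := (norm_sub_le _ _).trans_eq (by rw [norm_one, add_comm])
    _ ≤ Real.exp ‖x i‖ := Real.add_one_le_exp _

lemma exp_neg_div_le_one_sub {x r : ℝ} (hx : 0 ≤ x) (hxr : x ≤ r) (hr : r < 1) :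
    Real.exp (-(x / (1 - r))) ≤ 1 - x := by
  have hx1 : 0 < 1 - x := by linarith
  calc Real.exp (-(x / (1 - r))) ≤ Real.exp (-(x / (1 - x))) :=
        Real.exp_le_exp.2 (neg_le_neg (div_le_div_of_nonneg_left hx (by linarith) (by linarith)))
    _ ≤ (x / (1 - x) + 1)⁻¹ := by
        rw [Real.exp_neg]; exact inv_anti₀ (by positivity) (Real.add_one_le_exp _)
    _ = 1 - x := by field_simp; ring

lemma exp_neg_le_norm_prod_one_sub {ι : Type*} (s : Finset ι) {x : ι → ℂ} {r : ℝ}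
    (hx : ∀ i ∈ s, ‖x i‖ ≤ r) (hr : r < 1) :
    Real.exp (-((∑ i ∈ s, ‖x i‖) / (1 - r))) ≤ ‖∏ i ∈ s, (1 - x i)‖ := by
  rw [norm_prod, sum_div, ← sum_neg_distrib, Real.exp_sum]
  refine prod_le_prod (fun i _ => (Real.exp_pos _).le) fun i hi => ?_
  calc Real.exp (-(‖x i‖ / (1 - r))) ≤ 1 - ‖x i‖ :=
        exp_neg_div_le_one_sub (norm_nonneg _) (hx i hi) hr
    _ ≤ ‖1 - x i‖ := by simpa using norm_sub_norm_le (1 : ℂ) (x i)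

lemma sum_range_norm_mul_pow_le {Q : ℂ} (hQ : ‖Q‖ < 1) (n : ℕ) :
    ∑ k ∈ range n, ‖Q * Q ^ k‖ ≤ (1 - ‖Q‖)⁻¹ := by
  have h0 := norm_nonneg Q
  calc ∑ k ∈ range n, ‖Q * Q ^ k‖ ≤ ∑ k ∈ range n, ‖Q‖ ^ k := by
        refine sum_le_sum fun k _ => ?_
        rw [norm_mul, norm_pow]
        exact mul_le_of_le_one_left (by positivity) hQ.le
    _ ≤ ∑' k, ‖Q‖ ^ k :=
        (summable_geometric_of_lt_one h0 hQ).sum_le_tsum _ fun k _ => by positivity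
    _ = (1 - ‖Q‖)⁻¹ := tsum_geometric_of_lt_one h0 hQ

lemma norm_qPoch_self_le {Q : ℂ} (hQ : ‖Q‖ < 1) (n : ℕ) :
    ‖qPoch Q Q n‖ ≤ Real.exp (1 - ‖Q‖)⁻¹ :=
  (norm_prod_one_sub_le_exp _ _).trans (Real.exp_le_exp.2 (sum_range_norm_mul_pow_le hQ n))

lemma exp_neg_le_norm_qPoch_self {Q : ℂ} (hQ : ‖Q‖ < 1) (n : ℕ) :
    Real.exp (-((1 - ‖Q‖)⁻¹ / (1 - ‖Q‖))) ≤ ‖qPoch Q Q n‖ := by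
  refine le_trans ?_ (exp_neg_le_norm_prod_one_sub (range n) (x := fun k => Q * Q ^ k)
    (r := ‖Q‖) (fun k _ => ?_) hQ)
  · gcongr
    exact sum_range_norm_mul_pow_le hQ n
  · rw [norm_mul, norm_pow]
    exact mul_le_of_le_one_right (norm_nonneg Q) (pow_le_one₀ (norm_nonneg Q) hQ.le)

/-- The Gaussian binomial coefficient `[N, k]_Q`, set to `0` for `k > N`. -/
noncomputable def qBinom (Q : ℂ) (N k : ℕ) : ℂ :=
  if k ≤ N then qPoch Q Q N / (qPoch Q Q k * qPoch Q Q (N - k)) else 0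

lemma qBinom_of_lt {Q : ℂ} {N k : ℕ} (h : N < k) : qBinom Q N k = 0 :=
  if_neg h.not_ge

lemma qBinom_symm {Q : ℂ} {N k : ℕ} (h : k ≤ N) : qBinom Q N (N - k) = qBinom Q N k := by
  rw [qBinom, qBinom, if_pos h, if_pos (Nat.sub_le N k), Nat.sub_sub_self h, mul_comm]

lemma exists_norm_qBinom_le {Q : ℂ} (hQ : ‖Q‖ < 1) : ∃ C, ∀ N k, ‖qBinom Q N k‖ ≤ C := by
  set δ := Real.exp (-((1 - ‖Q‖)⁻¹ / (1 - ‖Q‖)))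
  refine ⟨Real.exp (1 - ‖Q‖)⁻¹ / (δ * δ), fun N k => ?_⟩
  unfold qBinom
  split_ifs
  · rw [norm_div, norm_mul]
    exact div_le_div₀ (by positivity) (norm_qPoch_self_le hQ N) (by positivity)
      (mul_le_mul (exp_neg_le_norm_qPoch_self hQ k) (exp_neg_le_norm_qPoch_self hQ _)
        (by positivity) (norm_nonneg _))
  · rw [norm_zero]; positivity

section Pascal

variable {Q : ℂ} (hQ : ∀ n, qPoch Q Q n ≠ 0)
include hQ

lemma qBinom_zero_right (N : ℕ) : qBinom Q N 0 = 1 := by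
  rw [qBinom, if_pos N.zero_le, Nat.sub_zero, qPoch_zero, one_mul, div_self (hQ N)]

lemma qBinom_self (N : ℕ) : qBinom Q N N = 1 := by
  rw [qBinom, if_pos le_rfl, Nat.sub_self, qPoch_zero, mul_one, div_self (hQ N)]

lemma qBinom_succ_succ (N k : ℕ) :
    qBinom Q (N + 1) (k + 1) = qBinom Q N k + Q ^ (k + 1) * qBinom Q N (k + 1) := by
  rcases lt_trichotomy N k with h | rfl | h
  · rw [qBinom_of_lt (by omega), qBinom_of_lt h, qBinom_of_lt (by omega)]; ring
  · rw [qBinom_self hQ, qBinom_self hQ, qBinom_of_lt (by omega)]; ring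
  obtain ⟨j, rfl⟩ := Nat.exists_eq_add_of_lt h
  simp only [qBinom, if_pos (by omega : k + 1 ≤ k + j + 1 + 1),
    if_pos (by omega : k ≤ k + j + 1), if_pos (by omega : k + 1 ≤ k + j + 1),
    show k + j + 1 + 1 - (k + 1) = j + 1 by omega, show k + j + 1 - k = j + 1 by omega,
    show k + j + 1 - (k + 1) = j by omega]
  have hk := hQ k
  have hj := hQ j
  have hkj := hQ (k + j + 1)
  have hk' := right_ne_zero_of_mul (qPoch_succ Q Q k ▸ hQ (k + 1))
  have hj' := right_ne_zero_of_mul (qPoch_succ Q Q j ▸ hQ (j + 1))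
  rw [qPoch_succ Q Q (k + j + 1), qPoch_succ Q Q k, qPoch_succ Q Q j]
  field_simp
  ring

end Pascal

lemma qPoch_eq_sum_qBinom {Q : ℂ} (hQ : ∀ n, qPoch Q Q n ≠ 0) (n : ℕ) (w : ℂ) :
    qPoch w Q n = ∑ k ∈ range (n + 1), (-1) ^ k * Q ^ k.choose 2 * qBinom Q n k * w ^ k := by
  induction n generalizing w with
  | zero => simp [qBinom_zero_right hQ]
  | succ n ih =>
    have hc (k : ℕ) : (-1 : ℂ) ^ (k + 1) * Q ^ (k + 1).choose 2
        = -((-1) ^ k * Q ^ k.choose 2 * Q ^ k) := by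
      rw [Nat.choose_succ_succ', Nat.choose_one_right, pow_add]; ring
    have first : ∑ k ∈ range (n + 1), (-1) ^ (k + 1) * Q ^ (k + 1).choose 2 * qBinom Q n k
        * w ^ (k + 1) = -w * qPoch (w * Q) Q n := by
      rw [ih, mul_sum]
      exact sum_congr rfl fun k _ => by rw [hc]; ring
    have second : ∑ k ∈ range (n + 1), (-1) ^ (k + 1) * Q ^ (k + 1).choose 2
        * (Q ^ (k + 1) * qBinom Q n (k + 1)) * w ^ (k + 1) = qPoch (w * Q) Q n - 1 := by
      have htop : qPoch (w * Q) Q n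
          = ∑ k ∈ range (n + 1 + 1), (-1) ^ k * Q ^ k.choose 2 * qBinom Q n k * (w * Q) ^ k := by
        rw [sum_range_succ, qBinom_of_lt (by omega), ih]; ring
      rw [htop, sum_range_succ' _ (n + 1), qBinom_zero_right hQ]
      simp only [pow_zero, Nat.choose_zero_succ, mul_one, add_sub_cancel_right]
      exact sum_congr rfl fun k _ => by ring
    rw [qPoch_succ', sum_range_succ']
    simp only [qBinom_succ_succ hQ, mul_add, add_mul, sum_add_distrib, first, second,
      qBinom_zero_right hQ, Nat.choose_zero_succ]
    ring

lemma summable_qBinom_mul_pow {Q a : ℂ} (hQ : ‖Q‖ < 1) (ha : ‖a‖ < 1) (n : ℕ) :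
    Summable fun m => qBinom Q (n + m) m * a ^ m := by
  obtain ⟨C, hC⟩ := exists_norm_qBinom_le hQ
  refine .of_norm_bounded ((summable_geometric_of_lt_one (norm_nonneg a) ha).mul_left C)
    fun m => ?_
  rw [norm_mul, norm_pow]
  exact mul_le_mul_of_nonneg_right (hC _ _) (by positivity)

lemma one_sub_mul_tsum_qBinom_mul_pow {Q a : ℂ} (hQ : ‖Q‖ < 1) (ha : ‖a‖ < 1) (n : ℕ) :
    (1 - a) * ∑' m, qBinom Q (n + 1 + m) m * a ^ m
      = ∑' m, qBinom Q (n + m) m * (a * Q) ^ m := by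
  have hQ' : ∀ n, qPoch Q Q n ≠ 0 := qPoch_ne_zero hQ hQ.le
  have haQ : ‖a * Q‖ < 1 := by
    rw [norm_mul]; exact mul_lt_one_of_nonneg_of_lt_one_left (norm_nonneg a) ha hQ.le
  have hS := summable_qBinom_mul_pow hQ ha (n + 1)
  have hT := summable_qBinom_mul_pow hQ haQ n
  have pascal (m : ℕ) : qBinom Q (n + 1 + (m + 1)) (m + 1) * a ^ (m + 1)
      = a * (qBinom Q (n + 1 + m) m * a ^ m)
        + qBinom Q (n + (m + 1)) (m + 1) * (a * Q) ^ (m + 1) := by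
    rw [show n + 1 + (m + 1) = n + 1 + m + 1 by omega, qBinom_succ_succ hQ',
      show n + (m + 1) = n + 1 + m by omega]
    ring
  have hS' := hS.tsum_eq_zero_add
  have hT' := hT.tsum_eq_zero_add
  rw [tsum_congr pascal, (hS.mul_left a).tsum_add ((summable_nat_add_iff 1).2 hT),
    tsum_mul_left] at hS'
  simp only [add_zero, pow_zero, mul_one, qBinom_zero_right hQ'] at hS' hT'
  linear_combination hS' - hT'

lemma tsum_qBinom_mul_pow {Q a : ℂ} (hQ : ‖Q‖ < 1) (ha : ‖a‖ < 1) (n : ℕ) :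
    ∑' m, qBinom Q (n + m) m * a ^ m = (qPoch a Q (n + 1))⁻¹ := by
  induction n generalizing a with
  | zero =>
    simp [qBinom_self (qPoch_ne_zero hQ hQ.le), tsum_geometric_of_norm_lt_one ha, qPoch]
  | succ n ih =>
    have haQ : ‖a * Q‖ < 1 := by
      rw [norm_mul]; exact mul_lt_one_of_nonneg_of_lt_one_left (norm_nonneg a) ha hQ.le
    have h1a : 1 - a ≠ 0 := sub_ne_zero.2 fun h => by simp [← h] at ha
    rw [qPoch_succ', mul_inv, ← ih haQ, ← one_sub_mul_tsum_qBinom_mul_pow hQ ha,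
      inv_mul_cancel_left₀ h1a]

lemma tsum_eq_tsum_sum_antidiagonal {α A : Type*} [AddCommMonoid α] [TopologicalSpace α]
    [T3Space α] [ContinuousAdd α] [AddCommMonoid A] [HasAntidiagonal A] {f : A × A → α}
    (hf : Summable f) : ∑' p, f p = ∑' n, ∑ p ∈ antidiagonal n, f p := by
  conv_rhs => congr; ext; rw [← sum_finset_coe, ← tsum_fintype (L := .unconditional _)]
  rw [← HasAntidiagonal.sigmaAntidiagonalEquivProd.tsum_eq f]
  exact (HasAntidiagonal.sigmaAntidiagonalEquivProd.summable_iff.2 hf).tsum_sigma'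
    fun n => (hasSum_fintype _).summable

lemma tsum_pow_mul_div_qPoch_neg {Q w : ℂ} (hQ : ‖Q‖ < 1) (hw : ‖w‖ < 1) :
    ∑' n : ℕ, w ^ (2 * n) * Q ^ n.choose 2 / qPoch (-w) Q (n + 1)
      = ∑' n : ℕ, qPoch w Q n * (-w) ^ n := by
  obtain ⟨C, hC⟩ := exists_norm_qBinom_le hQ
  set f : ℕ × ℕ → ℂ := fun p =>
    w ^ (2 * p.1) * Q ^ p.1.choose 2 * (qBinom Q (p.1 + p.2) p.2 * (-w) ^ p.2)
  have hf : Summable f := by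
    refine .of_norm_bounded (g := fun p => C * ((‖w‖ ^ 2) ^ p.1 * ‖w‖ ^ p.2)) ?_ fun p => ?_
    · exact .mul_left C <| .mul_of_nonneg
        (summable_geometric_of_lt_one (by positivity) (by nlinarith [norm_nonneg w]))
        (summable_geometric_of_lt_one (norm_nonneg w) hw) (fun _ => by positivity)
        fun _ => by positivity
    · simp only [f, norm_mul, norm_pow, norm_neg, ← pow_mul]
      calc _ ≤ ‖w‖ ^ (2 * p.1) * 1 * (C * ‖w‖ ^ p.2) := by
            gcongr
            exacts [pow_le_one₀ (norm_nonneg Q) hQ.le, hC _ _]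
        _ = _ := by ring
  have hdiag (N : ℕ) : ∑ p ∈ antidiagonal N, f p = qPoch w Q N * (-w) ^ N := by
    rw [Nat.sum_antidiagonal_eq_sum_range_succ_mk,
      qPoch_eq_sum_qBinom (qPoch_ne_zero hQ hQ.le), sum_mul]
    refine sum_congr rfl fun k hk => ?_
    obtain ⟨m, rfl⟩ := Nat.exists_eq_add_of_le (Nat.lt_succ_iff.1 (mem_range.1 hk))
    have hsign : ((-1 : ℂ) ^ k) ^ 2 = 1 := by rw [← pow_mul, pow_mul', neg_one_sq, one_pow]
    simp only [f, Nat.add_sub_cancel_left, ← qBinom_symm (Nat.le_add_right k m), pow_add,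
      neg_pow w k]
    linear_combination
      (-(w ^ (2 * k) * Q ^ k.choose 2 * (qBinom Q (k + m) m * (-w) ^ m))) * hsign
  calc _ = ∑' n, ∑' m, f (n, m) := tsum_congr fun n => by
        rw [div_eq_mul_inv, ← tsum_qBinom_mul_pow hQ (by rwa [norm_neg]) n, ← tsum_mul_left]
    _ = ∑' p, f p := (hf.tsum_prod' fun n => hf.prod_factor n).symm
    _ = _ := by rw [tsum_eq_tsum_sum_antidiagonal hf]; exact tsum_congr hdiag

lemma pow_two_mul_mul_pow_sq_add (z q : ℂ) (n : ℕ) :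
    z ^ (2 * n) * q ^ (n ^ 2 + n) = (z * q) ^ (2 * n) * (q ^ 2) ^ n.choose 2 := by
  have h : n ^ 2 + n = 2 * n + 2 * n.choose 2 := by
    have : (n ^ 2 + n : ℚ) = 2 * n + 2 * n.choose 2 := by rw [Nat.cast_choose_two]; ring
    exact_mod_cast this
  rw [h, pow_add, ← pow_mul, mul_pow]
  ring

theorem nu_spec_2_15 (q z : ℂ) (hq : ‖q‖ < 1) (hzq : ‖z * q‖ < 1) :
    ∑' n : ℕ, z ^ (2 * n) * q ^ (n ^ 2 + n) / qPoch (-(z * q)) (q ^ 2) (n + 1)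
      = ∑' n : ℕ, qPoch (z * q) (q ^ 2) n * (-(z * q)) ^ n := by
  have hQ : ‖q ^ 2‖ < 1 := by rw [norm_pow]; exact pow_lt_one₀ (norm_nonneg q) hq two_ne_zero
  simp only [pow_two_mul_mul_pow_sq_add]
  exact tsum_pow_mul_div_qPoch_neg hQ hzq
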